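/- arXiv:2408.12869 — 2 statements merged into one kernel-verified Lean document; each statement's English description precedes it below -/
import Mathlib

section
/- Let G be a 2-connected multigraph with spanning tree T and Y ⊆ E(G)∖T. If the auxiliary graph H^v_Y of a vertex v is bipartite, then its bipartition is unique (up to swapping the two sides). -/
/-- A multigraph on vertex type `V` with edge type `E`: each edge has an
unordered pair of endpoints. -/
structure Multigraph (V E : Type) where
  ends : E → Sym2 V

namespace Multigraph

variable {V E : Type}

/-- Adjacency within the subgraph with edge set `F` and vertex set `S`. -/
def Adj (G : Multigraph V E) (F : Set E) (S : Set V) (a b : V) : Prop :=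
  a ∈ S ∧ b ∈ S ∧ ∃ e ∈ F, G.ends e = s(a, b)

/-- Reachability (lying in the same connected component) in the subgraph with
edge set `F` and vertex set `S`. -/
def Reach (G : Multigraph V E) (F : Set E) (S : Set V) : V → V → Prop :=
  Relation.ReflTransGen (G.Adj F S)

/-- `v` is `Y`-splittable: the auxiliary graph `H^v_Y`, whose vertices are the
connected components of `G` minus the edges `Y` and the vertex `v`, with edges
induced by `Y`-edges between components (loops for `Y`-edges within a
component), is bipartite.  This is expressed by a 2-colouring of the vertices
which is constant on the components of `G^v_Y` and proper on `Y`-edges not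
incident to `v`. -/
def Splittable (G : Multigraph V E) (Y : Set E) (v : V) : Prop :=
  ∃ c : V → Bool,
    (∀ a b : V, G.Reach (Set.univ \ Y) {v}ᶜ a b → c a = c b) ∧
    (∀ y ∈ Y, ∀ a b : V, G.ends y = s(a, b) → a ≠ v → b ≠ v → c a ≠ c b)

/-- `T` is a spanning tree of `G`: the subgraph `(V, T)` is connected and
every edge of `T` is a bridge of it. -/
def IsSpanningTree (G : Multigraph V E) (T : Set E) : Prop :=
  (∀ a b : V, G.Reach T Set.univ a b) ∧
  ∀ f ∈ T, ∃ a b : V, ¬ G.Reach (T \ {f}) Set.univ a b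

/-- The set of tree edges lying on the tree path `P_{u,w}(T)` between `u` and
`w`: a tree edge lies on this path iff deleting it separates `u` from `w`. -/
def pathEdges (G : Multigraph V E) (T : Set E) (u w : V) : Set E :=
  {f | f ∈ T ∧ ¬ G.Reach (T \ {f}) Set.univ u w}

/-- The fundamental path `P_e(T)` of an edge `e` (as a set of tree edges). -/
def fundPath (G : Multigraph V E) (T : Set E) (e : E) : Set E :=
  {f | f ∈ T ∧ ∀ a b : V, G.ends e = s(a, b) → ¬ G.Reach (T \ {f}) Set.univ a b}

/-- `v` lies on the tree path between `u` and `w`. -/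
def OnPath (G : Multigraph V E) (T : Set E) (u w v : V) : Prop :=
  v = u ∨ v = w ∨ ¬ G.Reach T {v}ᶜ u w

/-- `v` lies on the fundamental path `P_e(T)` of the edge `e`. -/
def OnFundPath (G : Multigraph V E) (T : Set E) (e : E) (v : V) : Prop :=
  ∀ a b : V, G.ends e = s(a, b) → G.OnPath T a b v

/-- The vertices covered by an edge set `F`. -/
def verts (G : Multigraph V E) (F : Set E) : Set V :=
  {v | ∃ e ∈ F, v ∈ G.ends e}

/-- `P⁻¹_{u,w}(G,T)`: the non-tree edges whose fundamental path contains the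
tree path from `u` to `w`. -/
def Pinv (G : Multigraph V E) (T : Set E) (u w : V) : Set E :=
  {e | e ∉ T ∧ G.pathEdges T u w ⊆ G.fundPath T e}

/-- A multigraph is simple if it has no loops and no parallel edges. -/
def Simple (G : Multigraph V E) : Prop :=
  (∀ e : E, ¬ (G.ends e).IsDiag) ∧ ∀ e f : E, G.ends e = G.ends f → e = f

/-- A `k`-separation: a partition of the edges into two parts, each of size at
least `k`, whose vertex sets share exactly `k` vertices. -/
def IsSep (G : Multigraph V E) (k : ℕ) (E1 E2 : Set E) : Prop :=
  E1 ∪ E2 = Set.univ ∧ Disjoint E1 E2 ∧ k ≤ E1.ncard ∧ k ≤ E2.ncard ∧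
    (G.verts E1 ∩ G.verts E2).ncard = k

/-- Tutte `k`-connectivity: connected and without `ℓ`-separations for
`1 ≤ ℓ < k`. -/
def TutteConnected (G : Multigraph V E) (k : ℕ) : Prop :=
  (∀ a b : V, G.Reach Set.univ Set.univ a b) ∧
  ∀ l : ℕ, 1 ≤ l → l < k → ¬ ∃ E1 E2 : Set E, G.IsSep l E1 E2

/-- A 2-separation with designated separating vertices `u` and `w`. -/
def IsTwoSep (G : Multigraph V E) (E1 E2 : Set E) (u w : V) : Prop :=
  E1 ∪ E2 = Set.univ ∧ Disjoint E1 E2 ∧ 2 ≤ E1.ncard ∧ 2 ≤ E2.ncard ∧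
    u ≠ w ∧ G.verts E1 ∩ G.verts E2 = {u, w}

/-- `v` is an articulation vertex of the subgraph with edge set `F`: after
removing `v` (and its incident edges), some two remaining vertices are
disconnected. -/
def ArticulationVertex (G : Multigraph V E) (F : Set E) (v : V) : Prop :=
  ∃ a b : V, a ≠ v ∧ b ≠ v ∧ ¬ G.Reach F {v}ᶜ a b

/-- The subgraph on the edge set `E1`, augmented by one new edge `{u, w}`. -/
def augment (G : Multigraph V E) (E1 : Set E) (u w : V) :
    Multigraph V (↥E1 ⊕ Unit) :=
  ⟨Sum.elim (fun e => G.ends e.1) (fun _ => s(u, w))⟩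

/-- The edge set `Q` of the intersection of the fundamental paths of all
edges in `Y`. -/
def Qedges (G : Multigraph V E) (T Y : Set E) : Set E :=
  ⋂ y ∈ Y, G.fundPath T y

end Multigraph

/-!
Two proper 2-colourings of `H^v_Y` agree on non-`Y` edges of `G - v` (both are constant there) and
both flip along `Y`-edges, so `c₁ + c₂ (mod 2)` is constant along every edge of `G - v`. A
2-connected graph stays connected after deleting `v`: otherwise the edges meeting one component of
`G - v` and the remaining edges would form a 1-separation at `v`.
-/

namespace Multigraph

variable {V E : Type} {G : Multigraph V E}

lemma Reach.symm {F : Set E} {S : Set V} {a b : V} (h : G.Reach F S a b) : G.Reach F S b a := by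
  induction h with
  | refl => exact .refl
  | tail _ hadj ih =>
    obtain ⟨hx, hy, e, heF, he⟩ := hadj
    exact .head ⟨hy, hx, e, heF, by rw [he, Sym2.eq_swap]⟩ ih

lemma Reach.apply_eq {α : Type*} {F : Set E} {S : Set V} {f : V → α}
    (hf : ∀ x y, G.Adj F S x y → f x = f y) {a b : V} (h : G.Reach F S a b) : f a = f b := by
  induction h with
  | refl => rfl
  | tail _ hadj ih => exact ih.trans (hf _ _ hadj)

lemma Reach.exists_edge_mem_not_mem {F : Set E} {S : Set V} {C : Set V} {s t : V}
    (h : G.Reach F S s t) (hs : s ∈ C) (ht : t ∉ C) :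
    ∃ e ∈ F, ∃ x y, x ∈ C ∧ y ∉ C ∧ G.ends e = s(x, y) := by
  induction h with
  | refl => exact absurd hs ht
  | @tail x y _ hadj ih =>
    by_cases hx : x ∈ C
    · obtain ⟨-, -, e, heF, he⟩ := hadj
      exact ⟨e, heF, x, y, hx, ht, he⟩
    · exact ih hx

def componentAvoiding (G : Multigraph V E) (v a : V) : Set V :=
  {x | x ≠ v ∧ G.Reach Set.univ {v}ᶜ a x}

lemma mem_componentAvoiding_of_ends {v a x y : V} {e : E}
    (hx : x ∈ G.componentAvoiding v a) (hy : y ≠ v) (he : G.ends e = s(x, y)) :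
    y ∈ G.componentAvoiding v a :=
  ⟨hy, hx.2.tail ⟨hx.1, hy, e, Set.mem_univ e, he⟩⟩

lemma exists_ends_eq_of_not_reach_compl {v a b : V} (hconn : G.Reach Set.univ Set.univ a b)
    (ha : a ≠ v) (hb : b ≠ v) (hab : ¬ G.Reach Set.univ {v}ᶜ a b) :
    ∃ e x, x ∈ G.componentAvoiding v a ∧ G.ends e = s(x, v) := by
  obtain ⟨e, -, x, y, hx, hy, he⟩ := hconn.exists_edge_mem_not_mem
    (C := G.componentAvoiding v a) ⟨ha, .refl⟩ (fun h => hab h.2)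
  obtain rfl : y = v := by
    by_contra hyv
    exact hy (mem_componentAvoiding_of_ends hx hyv he)
  exact ⟨e, x, hx, he⟩

lemma verts_inter_verts_compl_subset (G : Multigraph V E) (v a : V) :
    G.verts {e | ∃ x ∈ G.componentAvoiding v a, x ∈ G.ends e} ∩
      G.verts {e | ∃ x ∈ G.componentAvoiding v a, x ∈ G.ends e}ᶜ ⊆ {v} := by
  rintro w ⟨⟨f₁, ⟨z, hz, hzf₁⟩, hwf₁⟩, ⟨f₂, hf₂, hwf₂⟩⟩
  by_contra hwv
  obtain ⟨⟨p, q⟩, hpq⟩ := (G.ends f₁).exists_rep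
  rw [← hpq, Sym2.mem_iff] at hzf₁ hwf₁
  have hwC : w ∈ G.componentAvoiding v a := by
    rcases hzf₁ with rfl | rfl <;> rcases hwf₁ with rfl | rfl
    · exact hz
    · exact mem_componentAvoiding_of_ends hz hwv hpq.symm
    · exact mem_componentAvoiding_of_ends hz hwv (by rw [← hpq, Sym2.eq_swap])
    · exact hz
  exact hf₂ ⟨w, hwC, hwf₂⟩

lemma TutteConnected.reach_compl_singleton [Finite E]
    (h2 : G.TutteConnected 2) {v a b : V} (ha : a ≠ v) (hb : b ≠ v) :
    G.Reach Set.univ {v}ᶜ a b := by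
  by_contra hab
  set E₁ : Set E := {e | ∃ x ∈ G.componentAvoiding v a, x ∈ G.ends e}
  obtain ⟨e₁, x₁, hx₁, he₁⟩ := exists_ends_eq_of_not_reach_compl (h2.1 a b) ha hb hab
  obtain ⟨e₂, x₂, hx₂, he₂⟩ :=
    exists_ends_eq_of_not_reach_compl (h2.1 b a) hb ha (fun h => hab h.symm)
  have he₁E₁ : e₁ ∈ E₁ := ⟨x₁, hx₁, by rw [he₁]; exact Sym2.mem_mk_left _ _⟩
  have he₂E₁ : e₂ ∉ E₁ := by
    rintro ⟨z, hz, hze₂⟩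
    rw [he₂, Sym2.mem_iff] at hze₂
    rcases hze₂ with rfl | rfl
    · exact hab (hz.2.trans hx₂.2.symm)
    · exact hz.1 rfl
  have hcut : G.verts E₁ ∩ G.verts E₁ᶜ = {v} :=
    (G.verts_inter_verts_compl_subset v a).antisymm <| Set.singleton_subset_iff.2
      ⟨⟨e₁, he₁E₁, by rw [he₁]; exact Sym2.mem_mk_right _ _⟩,
        ⟨e₂, he₂E₁, by rw [he₂]; exact Sym2.mem_mk_right _ _⟩⟩
  refine h2.2 1 le_rfl one_lt_two ⟨E₁, E₁ᶜ, Set.union_compl_self E₁, disjoint_compl_right,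
    (Set.ncard_pos).2 ⟨e₁, he₁E₁⟩, (Set.ncard_pos).2 ⟨e₂, he₂E₁⟩, ?_⟩
  rw [hcut, Set.ncard_singleton]

lemma xor_eq_of_adj_compl_singleton {Y : Set E} {v : V} {c₁ c₂ : V → Bool}
    (h₁const : ∀ a b : V, G.Reach (Set.univ \ Y) {v}ᶜ a b → c₁ a = c₁ b)
    (h₁prop : ∀ y ∈ Y, ∀ a b : V, G.ends y = s(a, b) → a ≠ v → b ≠ v → c₁ a ≠ c₁ b)
    (h₂const : ∀ a b : V, G.Reach (Set.univ \ Y) {v}ᶜ a b → c₂ a = c₂ b)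
    (h₂prop : ∀ y ∈ Y, ∀ a b : V, G.ends y = s(a, b) → a ≠ v → b ≠ v → c₂ a ≠ c₂ b)
    {x y : V} (hxy : G.Adj Set.univ {v}ᶜ x y) :
    xor (c₁ x) (c₂ x) = xor (c₁ y) (c₂ y) := by
  obtain ⟨hx, hy, e, -, he⟩ := hxy
  by_cases heY : e ∈ Y
  · have flip : ∀ p q r s : Bool, p ≠ q → r ≠ s → xor p r = xor q s := by decide
    exact flip _ _ _ _ (h₁prop e heY x y he hx hy) (h₂prop e heY x y he hx hy)
  · have hr : G.Reach (Set.univ \ Y) {v}ᶜ x y := .single ⟨hx, hy, e, ⟨Set.mem_univ e, heY⟩, he⟩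
    rw [h₁const x y hr, h₂const x y hr]

end Multigraph

theorem bipartition_unique_general {V E : Type} [Fintype E]
    (G : Multigraph V E) (h2 : G.TutteConnected 2)
    (Y : Set E) (v : V)
    (c₁ c₂ : V → Bool)
    (h₁const : ∀ a b : V, G.Reach (Set.univ \ Y) {v}ᶜ a b → c₁ a = c₁ b)
    (h₁prop : ∀ y ∈ Y, ∀ a b : V, G.ends y = s(a, b) → a ≠ v → b ≠ v →
      c₁ a ≠ c₁ b)
    (h₂const : ∀ a b : V, G.Reach (Set.univ \ Y) {v}ᶜ a b → c₂ a = c₂ b)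
    (h₂prop : ∀ y ∈ Y, ∀ a b : V, G.ends y = s(a, b) → a ≠ v → b ≠ v →
      c₂ a ≠ c₂ b) :
    ∀ a b : V, a ≠ v → b ≠ v → (c₁ a = c₁ b ↔ c₂ a = c₂ b) := by
  intro a b ha hb
  have hxor : xor (c₁ a) (c₂ a) = xor (c₁ b) (c₂ b) :=
    (h2.reach_compl_singleton ha hb).apply_eq
      (fun _ _ => Multigraph.xor_eq_of_adj_compl_singleton h₁const h₁prop h₂const h₂prop)
  have key : ∀ p q r s : Bool, xor p r = xor q s → (p = q ↔ r = s) := by decide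
  exact key _ _ _ _ hxor

/-- For a 2-connected multigraph, if the auxiliary graph `H^v_Y` is bipartite
then its bipartition is unique up to swapping the two sides: any two valid
2-colourings induce the same partition of the components of `G^v_Y`. -/
theorem bipartition_unique {V E : Type} [Fintype V] [Fintype E]
    (G : Multigraph V E) (h2 : G.TutteConnected 2)
    (T : Set E) (hT : G.IsSpanningTree T)
    (Y : Set E) (hYT : ∀ y ∈ Y, y ∉ T) (v : V)
    (c₁ c₂ : V → Bool)
    (h₁const : ∀ a b : V, G.Reach (Set.univ \ Y) {v}ᶜ a b → c₁ a = c₁ b)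
    (h₁prop : ∀ y ∈ Y, ∀ a b : V, G.ends y = s(a, b) → a ≠ v → b ≠ v →
      c₁ a ≠ c₁ b)
    (h₂const : ∀ a b : V, G.Reach (Set.univ \ Y) {v}ᶜ a b → c₂ a = c₂ b)
    (h₂prop : ∀ y ∈ Y, ∀ a b : V, G.ends y = s(a, b) → a ≠ v → b ≠ v →
      c₂ a ≠ c₂ b) :
    ∀ a b : V, a ≠ v → b ≠ v → (c₁ a = c₁ b ↔ c₂ a = c₂ b) :=
  bipartition_unique_general G h2 Y v c₁ c₂ h₁const h₁prop h₂const h₂prop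
end

section
/- Let G be a 2-connected multigraph with spanning tree T, Y ⊆ E(G)∖T non-empty, and (E1,E2) a 2-separation of G with separating vertices u,w such that P_{u,w}(T) ⊆ E1 and Y ∩ E2 = ∅. Let G' be the subgraph on E1 augmented by a new edge e = {u,w}. Then a vertex v of G is Y-splittable with respect to G if and only if v ∈ V(E1) and v is Y-splittable with respect to G'. -/
namespace Multigraph

variable {V E : Type}

lemma adj_symm' (G : Multigraph V E) {F : Set E} {S : Set V} {a b : V}
    (h : G.Adj F S a b) : G.Adj F S b a := by
  obtain ⟨ha, hb, e, he, hee⟩ := h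
  exact ⟨hb, ha, e, he, by rw [hee, Sym2.eq_swap]⟩

lemma reach_symm' (G : Multigraph V E) {F : Set E} {S : Set V} {a b : V}
    (h : G.Reach F S a b) : G.Reach F S b a := by
  induction h with
  | refl => exact .refl
  | tail _ h2 ih => exact Relation.ReflTransGen.trans (.single (G.adj_symm' h2)) ih

lemma reach_mono' (G : Multigraph V E) {F F' : Set E} {S S' : Set V}
    (hF : F ⊆ F') (hS : S ⊆ S') {a b : V}
    (h : G.Reach F S a b) : G.Reach F' S' a b := by
  refine Relation.ReflTransGen.mono ?_ _ _ h
  rintro x y ⟨hx, hy, e, he, hee⟩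
  exact ⟨hS hx, hS hy, e, hF he, hee⟩

lemma reach_const' (G : Multigraph V E) {F : Set E} {S : Set V} (c : V → Bool)
    (hc : ∀ a b, G.Adj F S a b → c a = c b) {a b : V}
    (h : G.Reach F S a b) : c a = c b := by
  induction h with
  | refl => rfl
  | tail _ h2 ih => exact ih.trans (hc _ _ h2)

lemma reach_avoid' (G : Multigraph V E) {F : Set E} {v : V}
    (hF : ∀ e ∈ F, v ∉ G.ends e) {a b : V}
    (h : G.Reach F Set.univ a b) : G.Reach F {v}ᶜ a b := by
  induction h with
  | refl => exact .refl
  | @tail x y h1 h2 ih =>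
    obtain ⟨_, _, e, he, hee⟩ := h2
    have hx : x ∈ G.ends e := by rw [hee]; exact Sym2.mem_mk_left x y
    have hy : y ∈ G.ends e := by rw [hee]; exact Sym2.mem_mk_right x y
    have hxv : x ≠ v := fun h' => hF e he (h' ▸ hx)
    have hyv : y ≠ v := fun h' => hF e he (h' ▸ hy)
    exact ih.tail ⟨hxv, hyv, e, he, hee⟩

lemma reach_decompose' (G : Multigraph V E) {F : Set E} {f : E} {p q : V}
    (hf : G.ends f = s(p, q)) {a b : V} (h : G.Reach F Set.univ a b) :
    G.Reach (F \ {f}) Set.univ a b ∨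
      (G.Reach (F \ {f}) Set.univ a p ∧ G.Reach (F \ {f}) Set.univ q b) ∨
      (G.Reach (F \ {f}) Set.univ a q ∧ G.Reach (F \ {f}) Set.univ p b) := by
  induction h with
  | refl => exact Or.inl .refl
  | @tail x y h1 h2 ih =>
    obtain ⟨-, -, e, he, hee⟩ := h2
    by_cases hef : e = f
    · subst hef
      rw [hf] at hee
      have hpq : (p = x ∧ q = y) ∨ (p = y ∧ q = x) := Sym2.eq_iff.mp hee
      rcases hpq with ⟨hp, hq⟩ | ⟨hp, hq⟩ <;> subst hp <;> subst hq
      · rcases ih with h | ⟨h1', h2'⟩ | ⟨h1', h2'⟩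
        · exact Or.inr (Or.inl ⟨h, .refl⟩)
        · exact Or.inr (Or.inl ⟨h1', .refl⟩)
        · exact Or.inl h1'
      · rcases ih with h | ⟨h1', h2'⟩ | ⟨h1', h2'⟩
        · exact Or.inr (Or.inr ⟨h, .refl⟩)
        · exact Or.inl h1'
        · exact Or.inr (Or.inr ⟨h1', .refl⟩)
    · have step : G.Adj (F \ {f}) Set.univ x y :=
        ⟨trivial, trivial, e, ⟨he, hef⟩, hee⟩
      rcases ih with h | ⟨h1', h2'⟩ | ⟨h1', h2'⟩
      · exact Or.inl (h.tail step)
      · exact Or.inr (Or.inl ⟨h1', h2'.tail step⟩)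
      · exact Or.inr (Or.inr ⟨h1', h2'.tail step⟩)

lemma bridge_ends' (G : Multigraph V E) {T : Set E} (hT : G.IsSpanningTree T)
    {f : E} (hfT : f ∈ T) {p q : V} (hf : G.ends f = s(p, q)) :
    ¬ G.Reach (T \ {f}) Set.univ p q := by
  intro hpq
  obtain ⟨a, b, hab⟩ := hT.2 f hfT
  rcases G.reach_decompose' hf (hT.1 a b) with h | ⟨h1, h2⟩ | ⟨h1, h2⟩
  · exact hab h
  · exact hab (h1.trans (hpq.trans h2))
  · exact hab (h1.trans ((G.reach_symm' hpq).trans h2))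

lemma reach_remove' (G : Multigraph V E) {T A : Set E} (hT : G.IsSpanningTree T)
    (hA : A ⊆ T) {f : E} (hfT : f ∈ T) {x y : V}
    (hAxy : G.Reach A Set.univ x y) (hfxy : G.Reach (T \ {f}) Set.univ x y) :
    G.Reach (A \ {f}) Set.univ x y := by
  obtain ⟨p, q, hf⟩ : ∃ p q, G.ends f = s(p, q) := by
    induction G.ends f using Sym2.ind with
    | _ p q => exact ⟨p, q, rfl⟩
  have hsub : A \ {f} ⊆ T \ {f} := Set.diff_subset_diff_left hA
  rcases G.reach_decompose' hf hAxy with h | ⟨h1, h2⟩ | ⟨h1, h2⟩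
  · exact h
  · exact absurd (((G.reach_mono' hsub le_rfl (G.reach_symm' h1)).trans hfxy).trans
      (G.reach_mono' hsub le_rfl (G.reach_symm' h2))) (G.bridge_ends' hT hfT hf)
  · exact absurd (G.reach_symm' (((G.reach_mono' hsub le_rfl (G.reach_symm' h1)).trans
      hfxy).trans (G.reach_mono' hsub le_rfl (G.reach_symm' h2))))
      (G.bridge_ends' hT hfT hf)

end Multigraph

namespace Multigraph
variable {V E : Type}

lemma verts_mono' (G : Multigraph V E) {F F' : Set E} (h : F ⊆ F') :
    G.verts F ⊆ G.verts F' := by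
  rintro x ⟨e, he, hx⟩
  exact ⟨e, h he, hx⟩

lemma mem_verts_of_ends (G : Multigraph V E) {F : Set E} {e : E} (he : e ∈ F)
    {a b : V} (hab : G.ends e = s(a, b)) : a ∈ G.verts F ∧ b ∈ G.verts F :=
  ⟨⟨e, he, by rw [hab]; exact Sym2.mem_mk_left a b⟩,
   ⟨e, he, by rw [hab]; exact Sym2.mem_mk_right a b⟩⟩

/-- H3: the tree path between `u` and `w` can be realised inside `T ∩ E1`. -/
lemma tree_reach_inter (G : Multigraph V E) [Fintype E] {T E1 E2 : Set E} {u w : V}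
    (hT : G.IsSpanningTree T) (hcompl : ∀ e : E, e ∈ E1 ↔ e ∉ E2)
    (hpath : G.pathEdges T u w ⊆ E1) :
    G.Reach (T ∩ E1) Set.univ u w := by
  have key : ∀ B : Set E, B.Finite → B ⊆ T ∩ E2 → G.Reach (T \ B) Set.univ u w := by
    intro B hBfin
    refine Set.Finite.induction_on
      (motive := fun B _ => B ⊆ T ∩ E2 → G.Reach (T \ B) Set.univ u w) B hBfin
      (fun _ => by simpa using hT.1 u w) ?_
    · intro f s hfs hsfin ih hsub
      have hfT : f ∈ T := (hsub (Set.mem_insert f s)).1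
      have hfE2 : f ∈ E2 := (hsub (Set.mem_insert f s)).2
      have h1 : G.Reach (T \ s) Set.univ u w :=
        ih ((Set.subset_insert f s).trans hsub)
      have hfa : G.Reach (T \ {f}) Set.univ u w := by
        by_contra hcc
        exact (hcompl f).mp (hpath ⟨hfT, hcc⟩) hfE2
      have h2 := G.reach_remove' hT Set.diff_subset hfT h1 hfa
      have heq : (T \ s) \ {f} = T \ insert f s := by
        rw [Set.diff_diff, Set.union_comm, ← Set.insert_eq]
      rwa [heq] at h2
  have h := key (T ∩ E2) (Set.toFinite _) le_rfl
  have heq : T \ (T ∩ E2) = T ∩ E1 := by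
    ext e
    simp only [Set.mem_diff, Set.mem_inter_iff, hcompl e]
    tauto
  rwa [heq] at h

/-- H2': any two vertices of `V(E1)` are connected within `T ∩ E1`. -/
lemma reach_E1_side (G : Multigraph V E) {T E1 E2 : Set E} {u w : V}
    (hT : G.IsSpanningTree T)
    (hunion : E1 ∪ E2 = Set.univ)
    (hboth : G.verts E1 ∩ G.verts E2 ⊆ {u, w})
    (huw : G.Reach (T ∩ E1) Set.univ u w)
    {a b : V} (ha : a ∈ G.verts E1) (hb : b ∈ G.verts E1) :
    G.Reach (T ∩ E1) Set.univ a b := by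
  have main : ∀ x, G.Reach T Set.univ a x →
      (x ∈ G.verts E1 → G.Reach (T ∩ E1) Set.univ a x) ∧
      (x ∈ G.verts E2 → G.Reach (T ∩ E1) Set.univ a u) := by
    intro x hx
    induction hx with
    | refl =>
      refine ⟨fun _ => .refl, fun ha2 => ?_⟩
      rcases hboth ⟨ha, ha2⟩ with h | h
      · exact h ▸ Relation.ReflTransGen.refl
      · exact h ▸ G.reach_symm' huw
    | @tail x y h1 h2 ih =>
      obtain ⟨-, -, e, heT, hee⟩ := h2
      have he12 : e ∈ E1 ∨ e ∈ E2 := by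
        have : e ∈ E1 ∪ E2 := hunion.symm ▸ Set.mem_univ e
        exact this
      rcases he12 with heE1 | heE2
      · obtain ⟨hx1, hy1⟩ := G.mem_verts_of_ends heE1 hee
        have hay : G.Reach (T ∩ E1) Set.univ a y :=
          (ih.1 hx1).tail ⟨trivial, trivial, e, ⟨heT, heE1⟩, hee⟩
        refine ⟨fun _ => hay, fun hy2 => ?_⟩
        rcases hboth ⟨hy1, hy2⟩ with h | h
        · exact h ▸ hay
        · exact (h ▸ hay).trans (G.reach_symm' huw)
      · obtain ⟨hx2, hy2⟩ := G.mem_verts_of_ends heE2 hee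
        have hau : G.Reach (T ∩ E1) Set.univ a u := ih.2 hx2
        refine ⟨fun hy1 => ?_, fun _ => hau⟩
        rcases hboth ⟨hy1, hy2⟩ with h | h
        · exact h ▸ hau
        · exact h ▸ hau.trans huw
  exact (main b (hT.1 a b)).1 hb

/-- H1: `u` and `w` are connected within `E2` (from 2-connectivity). -/
lemma reach_E2_uw (G : Multigraph V E) [Fintype V] [Fintype E] {E1 E2 : Set E} {u w : V}
    (h2 : G.TutteConnected 2)
    (hunion : E1 ∪ E2 = Set.univ) (hdisj : Disjoint E1 E2)
    (hc1 : 2 ≤ E1.ncard)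
    (hvint : G.verts E1 ∩ G.verts E2 = {u, w}) :
    G.Reach E2 Set.univ u w := by
  by_contra hc
  set U : Set V := {x | G.Reach E2 Set.univ u x} with hU
  set A : Set E := {e | e ∈ E2 ∧ ∃ x ∈ G.ends e, x ∈ U} with hA
  have hAU : ∀ e ∈ A, ∀ x ∈ G.ends e, x ∈ U := by
    rintro e ⟨heE2, x, hx, hxU⟩ y hy
    obtain ⟨p, q, hpq⟩ : ∃ p q, G.ends e = s(p, q) := by
      induction G.ends e using Sym2.ind with
      | _ p q => exact ⟨p, q, rfl⟩
    have hstep : G.Reach E2 Set.univ p q :=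
      .single ⟨trivial, trivial, e, heE2, hpq⟩
    rw [hpq, Sym2.mem_iff] at hx hy
    have hpu : p ∈ U → q ∈ U := fun h => h.trans hstep
    have hqu : q ∈ U → p ∈ U := fun h => h.trans (G.reach_symm' hstep)
    rcases hx with rfl | rfl <;> rcases hy with rfl | rfl
    · exact hxU
    · exact hpu hxU
    · exact hqu hxU
    · exact hxU
  have hwboth : w ∈ G.verts E1 ∩ G.verts E2 := by rw [hvint]; simp
  have huboth : u ∈ G.verts E1 ∩ G.verts E2 := by rw [hvint]; simp
  obtain ⟨ew, hewE2, hwew⟩ := hwboth.2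
  have hwU : w ∉ U := hc
  have hewA : ew ∉ A := fun h => hwU (hAU ew h w hwew)
  have huU : u ∈ U := .refl
  refine h2.2 1 le_rfl one_lt_two ⟨E1 ∪ A, E2 \ A, ?_, ?_, ?_, ?_, ?_⟩
  · apply Set.eq_univ_of_univ_subset
    rw [← hunion]
    rintro e (he | he)
    · exact Or.inl (Or.inl he)
    · by_cases heA : e ∈ A
      · exact Or.inl (Or.inr heA)
      · exact Or.inr ⟨he, heA⟩
  · rw [Set.disjoint_left]
    rintro e (he | he) ⟨he2, hena⟩
    · exact (Set.disjoint_left.mp hdisj he) he2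
    · exact hena he
  · calc 1 ≤ E1.ncard := le_trans one_le_two hc1
    _ ≤ (E1 ∪ A).ncard := Set.ncard_le_ncard Set.subset_union_left (Set.toFinite _)
  · rw [Nat.one_le_iff_ne_zero, ← Nat.pos_iff_ne_zero, Set.ncard_pos (Set.toFinite _)]
    exact ⟨ew, hewE2, hewA⟩
  · have hkey : G.verts (E1 ∪ A) ∩ G.verts (E2 \ A) = {w} := by
      apply Set.eq_singleton_iff_unique_mem.mpr
      constructor
      · exact ⟨G.verts_mono' Set.subset_union_left hwboth.1,
          ⟨ew, ⟨hewE2, hewA⟩, hwew⟩⟩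
      · rintro x ⟨hx1, hx2⟩
        obtain ⟨eb, ⟨hebE2, hebA⟩, hxeb⟩ := hx2
        have hxU : x ∉ U := fun h => hebA ⟨hebE2, x, hxeb, h⟩
        obtain ⟨ea, hea, hxea⟩ := hx1
        rcases hea with heaE1 | heaA
        · have : x ∈ G.verts E1 ∩ G.verts E2 := ⟨⟨ea, heaE1, hxea⟩, ⟨eb, hebE2, hxeb⟩⟩
          rw [hvint] at this
          rcases this with rfl | rfl
          · exact absurd huU hxU
          · rfl
        · exact absurd (hAU ea heaA x hxea) hxU
    rw [hkey, Set.ncard_singleton]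

end Multigraph

/-- Reduction along a 2-separation whose `E2`-side is disjoint from `Y`:
a vertex `v` is `Y`-splittable in `G` iff `v ∈ V(E1)` and `v` is
`Y`-splittable in the graph `G'` obtained from `E1` by adding a new edge
`{u, w}`. -/
theorem empty_propagation_cotree {V E : Type} [Fintype V] [Fintype E]
    (G : Multigraph V E) (h2 : G.TutteConnected 2)
    (T : Set E) (hT : G.IsSpanningTree T)
    (Y : Set E) (hYT : ∀ y ∈ Y, y ∉ T) (hYne : Y.Nonempty)
    (E1 E2 : Set E) (u w : V) (hsep : G.IsTwoSep E1 E2 u w)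
    (hpath : G.pathEdges T u w ⊆ E1) (hY2 : Y ∩ E2 = ∅) (v : V) :
    G.Splittable Y v ↔
      v ∈ G.verts E1 ∧
        (G.augment E1 u w).Splittable
          (Sum.inl '' {e : ↥E1 | (e : E) ∈ Y} : Set (↥E1 ⊕ Unit)) v := by
  obtain ⟨hunion, hdisj, hc1, hc2, huwne, hvint⟩ := hsep
  have hcompl : ∀ e : E, e ∈ E1 ↔ e ∉ E2 := by
    intro e
    constructor
    · exact fun h1 h2 => Set.disjoint_left.mp hdisj h1 h2
    · intro h2
      have : e ∈ E1 ∪ E2 := hunion.symm ▸ Set.mem_univ e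
      rcases this with h | h
      · exact h
      · exact absurd h h2
  have hYE1 : Y ⊆ E1 := by
    intro y hy
    refine (hcompl y).mpr fun h2 => ?_
    have : y ∈ Y ∩ E2 := ⟨hy, h2⟩
    rw [hY2] at this
    exact this
  have hboth : G.verts E1 ∩ G.verts E2 ⊆ {u, w} := hvint.le
  have huE1 : u ∈ G.verts E1 := by
    have : u ∈ G.verts E1 ∩ G.verts E2 := by rw [hvint]; simp
    exact this.1
  have hwE1 : w ∈ G.verts E1 := by
    have : w ∈ G.verts E1 ∩ G.verts E2 := by rw [hvint]; simp
    exact this.1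
  have H3 : G.Reach (T ∩ E1) Set.univ u w := G.tree_reach_inter hT hcompl hpath
  have H1 : G.Reach E2 Set.univ u w := G.reach_E2_uw h2 hunion hdisj hc1 hvint
  have hTE1sub : T ∩ E1 ⊆ Set.univ \ Y :=
    fun e he => ⟨trivial, fun hy => hYT e hy he.1⟩
  have hE2sub : E2 ⊆ Set.univ \ Y := by
    intro e he
    refine ⟨trivial, fun hy => ?_⟩
    have : e ∈ Y ∩ E2 := ⟨hy, he⟩
    rw [hY2] at this
    exact this
  constructor
  · rintro ⟨c, hcon, hprop⟩
    obtain ⟨y0, hy0⟩ := hYne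
    obtain ⟨a0, b0, hab0⟩ : ∃ p q, G.ends y0 = s(p, q) := by
      induction G.ends y0 using Sym2.ind with
      | _ p q => exact ⟨p, q, rfl⟩
    have hy0E1 : y0 ∈ E1 := hYE1 hy0
    obtain ⟨ha0, hb0⟩ := G.mem_verts_of_ends hy0E1 hab0
    have hvE1 : v ∈ G.verts E1 := by
      by_contra hv
      have hva : a0 ≠ v := fun h => hv (h ▸ ha0)
      have hvb : b0 ≠ v := fun h => hv (h ▸ hb0)
      have hr : G.Reach (T ∩ E1) Set.univ a0 b0 :=
        G.reach_E1_side hT hunion hboth H3 ha0 hb0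
      have hr2 : G.Reach (T ∩ E1) {v}ᶜ a0 b0 := by
        refine G.reach_avoid' (fun e he hve => ?_) hr
        exact hv ⟨e, he.2, hve⟩
      exact hprop y0 hy0 a0 b0 hab0 hva hvb
        (hcon a0 b0 (G.reach_mono' hTE1sub le_rfl hr2))
    have hvE2 : v ∉ G.verts E2 ∨ v = u ∨ v = w := by
      by_cases h : v ∈ G.verts E2
      · exact Or.inr (hboth ⟨hvE1, h⟩)
      · exact Or.inl h
    refine ⟨hvE1, c, ?_, ?_⟩
    · intro a b h
      refine (G.augment E1 u w).reach_const' c ?_ h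
      rintro x y ⟨hxv, hyv, e', he', hee⟩
      match e' with
      | Sum.inl ⟨e, heE1⟩ =>
        have heY : e ∉ Y := by
          intro hy
          exact he'.2 ⟨⟨e, heE1⟩, hy, rfl⟩
        exact hcon x y (.single ⟨hxv, hyv, e, ⟨trivial, heY⟩, hee⟩)
      | Sum.inr _ =>
        have hee' : s(u, w) = s(x, y) := hee
        have hxy : (u = x ∧ w = y) ∨ (u = y ∧ w = x) := Sym2.eq_iff.mp hee'
        have hvnot : v ∉ G.verts E2 := by
          rcases hvE2 with h' | h' | h'
          · exact h'
          · exfalso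
            rcases hxy with ⟨rfl, -⟩ | ⟨rfl, -⟩
            · exact hxv (h'.symm ▸ rfl)
            · exact hyv (h'.symm ▸ rfl)
          · exfalso
            rcases hxy with ⟨-, rfl⟩ | ⟨-, rfl⟩
            · exact hyv (h'.symm ▸ rfl)
            · exact hxv (h'.symm ▸ rfl)
        have hr : G.Reach E2 {v}ᶜ u w := by
          refine G.reach_avoid' (fun e he hve => ?_) H1
          exact hvnot ⟨e, he, hve⟩
        have hcuw : c u = c w := hcon u w (G.reach_mono' hE2sub le_rfl hr)
        rcases hxy with ⟨rfl, rfl⟩ | ⟨rfl, rfl⟩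
        · exact hcuw
        · exact hcuw.symm
    · rintro y' hy' a b hee hav hbv
      obtain ⟨⟨e, heE1⟩, heY, rfl⟩ := hy'
      exact hprop e heY a b hee hav hbv
  · rintro ⟨hvE1, c', hcon, hprop⟩
    classical
    set k := if v = u then c' w else c' u with hk
    set c : V → Bool :=
      fun x => if x ∈ G.verts E2 ∧ x ≠ u ∧ x ≠ w then k else c' x with hcdef
    have hcE1 : ∀ x ∈ G.verts E1, c x = c' x := by
      intro x hx
      rw [hcdef]
      simp only
      rw [if_neg]
      rintro ⟨hx2, hxu, hxw⟩
      rcases hboth ⟨hx, hx2⟩ with h | h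
      · exact hxu h
      · exact hxw h
    have hkuw : ∀ x, x ∈ G.verts E2 → x ≠ v → c x = k := by
      intro x hx hxv
      by_cases hxu : x = u
      · subst hxu
        have hvu : v ≠ x := fun h => hxv h.symm
        rw [hcE1 x huE1, hk, if_neg (fun h => hvu h)]
      by_cases hxw : x = w
      · subst hxw
        rw [hcE1 x hwE1, hk]
        by_cases hvu : v = u
        · rw [if_pos hvu]
        · rw [if_neg hvu]
          have hvw : v ≠ x := fun h => hxv h.symm
          refine (hcon u x (.single ⟨?_, ?_, Sum.inr (), ⟨trivial, ?_⟩, rfl⟩)).symm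
          · intro h
            exact hvu (Set.mem_singleton_iff.mp h).symm
          · intro h
            exact hvw (Set.mem_singleton_iff.mp h).symm
          · rintro ⟨z, -, hz⟩
            exact Sum.inl_ne_inr hz
      · rw [hcdef]
        simp only
        rw [if_pos ⟨hx, hxu, hxw⟩]
    have hstep : ∀ a b, G.Adj (Set.univ \ Y) {v}ᶜ a b → c a = c b := by
      rintro a b ⟨hav, hbv, e, ⟨-, heY⟩, hee⟩
      have he12 : e ∈ E1 ∪ E2 := hunion.symm ▸ Set.mem_univ e
      rcases he12 with heE1 | heE2
      · obtain ⟨ha1, hb1⟩ := G.mem_verts_of_ends heE1 hee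
        rw [hcE1 a ha1, hcE1 b hb1]
        refine hcon a b (.single ⟨hav, hbv, Sum.inl ⟨e, heE1⟩, ⟨trivial, ?_⟩, hee⟩)
        rintro ⟨z, hz, hze⟩
        have : (z : E) = e := by
          have := congrArg (Sum.elim (fun x : ↥E1 => (x : E)) (fun _ => e)) hze
          simpa using this
        exact heY (this ▸ hz)
      · obtain ⟨ha2, hb2⟩ := G.mem_verts_of_ends heE2 hee
        rw [hkuw a ha2 hav, hkuw b hb2 hbv]
    refine ⟨c, fun a b h => G.reach_const' c hstep h, ?_⟩
    rintro y hy a b hee hav hbv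
    have hyE1 : y ∈ E1 := hYE1 hy
    obtain ⟨ha1, hb1⟩ := G.mem_verts_of_ends hyE1 hee
    rw [hcE1 a ha1, hcE1 b hb1]
    exact hprop (Sum.inl ⟨y, hyE1⟩) ⟨⟨y, hyE1⟩, hy, rfl⟩ a b hee hav hbv
end
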